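/- Over PA (with T an arbitrary fresh unary predicate), the scheme IΔ₀(T) of Δ₀-induction for formulas containing T implies SeqOInd, and SeqOInd implies SeqInd. -/

import Mathlib

/- Abstract formalization of "Disjunctive correctness half-way"-style results on
   compositional truth over PA.  Models of PA are given by `PAStruct` together with
   `ModelOfPA` (full first-order induction via a deep embedding of L_PA-formulas).
   The internal (Gödel-coded, possibly nonstandard) syntax of a model is packaged in
   the structure `Coding`, whose fields are the arithmetically (Δ₀-)definable coding
   functions together with their basic PA-provable properties. -/

namespace CTPaper

/-- Terms of the arithmetical language L_PA = {0, S, +, ×}, variables indexed by ℕ. -/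
inductive Trm : Type
  | var : ℕ → Trm
  | zero : Trm
  | succ : Trm → Trm
  | add : Trm → Trm → Trm
  | mul : Trm → Trm → Trm

/-- First-order formulas of L_PA. -/
inductive Fml : Type
  | eq : Trm → Trm → Fml
  | not : Fml → Fml
  | or : Fml → Fml → Fml
  | and : Fml → Fml → Fml
  | ex : ℕ → Fml → Fml
  | all : ℕ → Fml → Fml

/-- Δ₀ (bounded) formulas of L_PA. -/
inductive Fml0 : Type
  | eq : Trm → Trm → Fml0
  | not : Fml0 → Fml0
  | or : Fml0 → Fml0 → Fml0
  | and : Fml0 → Fml0 → Fml0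
  | bex : ℕ → Trm → Fml0 → Fml0
  | ball : ℕ → Trm → Fml0 → Fml0

/-- Δ₀ (bounded) formulas of the language L_PA ∪ {T}, T a fresh unary predicate. -/
inductive TFml0 : Type
  | eq : Trm → Trm → TFml0
  | tr : Trm → TFml0
  | not : TFml0 → TFml0
  | or : TFml0 → TFml0 → TFml0
  | and : TFml0 → TFml0 → TFml0
  | bex : ℕ → Trm → TFml0 → TFml0
  | ball : ℕ → Trm → TFml0 → TFml0

/-- Formulas of the language L_PA ∪ {T}. -/
inductive TFml : Type
  | eq : Trm → Trm → TFml
  | tr : Trm → TFml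
  | not : TFml → TFml
  | or : TFml → TFml → TFml
  | and : TFml → TFml → TFml
  | ex : ℕ → TFml → TFml
  | all : ℕ → TFml → TFml

/-- Formulas of L_PA extended by a family of fresh unary predicates indexed by `P`. -/
inductive FmlX (P : Type) : Type
  | eq : Trm → Trm → FmlX P
  | pat : P → Trm → FmlX P
  | not : FmlX P → FmlX P
  | or : FmlX P → FmlX P → FmlX P
  | and : FmlX P → FmlX P → FmlX P
  | ex : ℕ → FmlX P → FmlX P
  | all : ℕ → FmlX P → FmlX P

def Trm.fv : Trm → Set ℕ
  | .var n => {n}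
  | .zero => ∅
  | .succ t => t.fv
  | .add t u => t.fv ∪ u.fv
  | .mul t u => t.fv ∪ u.fv

def Fml.fv : Fml → Set ℕ
  | .eq t u => t.fv ∪ u.fv
  | .not φ => φ.fv
  | .or φ ψ => φ.fv ∪ ψ.fv
  | .and φ ψ => φ.fv ∪ ψ.fv
  | .ex n φ => φ.fv \ {n}
  | .all n φ => φ.fv \ {n}

/-- An L_PA-sentence: a formula with no free variables. -/
def Fml.Closed (φ : Fml) : Prop := Fml.fv φ = ∅

/-- A structure for the language L_PA. -/
structure PAStruct where
  M : Type
  zero : M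
  succ : M → M
  add : M → M → M
  mul : M → M → M

def PAStruct.evalT (N : PAStruct) (v : ℕ → N.M) : Trm → N.M
  | .var n => v n
  | .zero => N.zero
  | .succ t => N.succ (N.evalT v t)
  | .add t u => N.add (N.evalT v t) (N.evalT v u)
  | .mul t u => N.mul (N.evalT v t) (N.evalT v u)

/-- The (definable) ordering of the model. -/
def PAStruct.le (N : PAStruct) (a b : N.M) : Prop := ∃ c, N.add a c = b

def PAStruct.lt (N : PAStruct) (a b : N.M) : Prop := N.le (N.succ a) b

/-- Tarskian satisfaction for L_PA-formulas. -/
def PAStruct.Sat (N : PAStruct) : (ℕ → N.M) → Fml → Prop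
  | v, .eq t u => N.evalT v t = N.evalT v u
  | v, .not φ => ¬ N.Sat v φ
  | v, .or φ ψ => N.Sat v φ ∨ N.Sat v ψ
  | v, .and φ ψ => N.Sat v φ ∧ N.Sat v ψ
  | v, .ex n φ => ∃ a, N.Sat (Function.update v n a) φ
  | v, .all n φ => ∀ a, N.Sat (Function.update v n a) φ

/-- Satisfaction for Δ₀ formulas of L_PA. -/
def PAStruct.Sat0 (N : PAStruct) : (ℕ → N.M) → Fml0 → Prop
  | v, .eq t u => N.evalT v t = N.evalT v u
  | v, .not φ => ¬ N.Sat0 v φ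
  | v, .or φ ψ => N.Sat0 v φ ∨ N.Sat0 v ψ
  | v, .and φ ψ => N.Sat0 v φ ∧ N.Sat0 v ψ
  | v, .bex n t φ => ∃ a, N.le a (N.evalT v t) ∧ N.Sat0 (Function.update v n a) φ
  | v, .ball n t φ => ∀ a, N.le a (N.evalT v t) → N.Sat0 (Function.update v n a) φ

/-- Satisfaction for Δ₀ formulas of L_PA ∪ {T}. -/
def PAStruct.SatT0 (N : PAStruct) (T : N.M → Prop) : (ℕ → N.M) → TFml0 → Prop
  | v, .eq t u => N.evalT v t = N.evalT v u
  | v, .tr t => T (N.evalT v t)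
  | v, .not φ => ¬ N.SatT0 T v φ
  | v, .or φ ψ => N.SatT0 T v φ ∨ N.SatT0 T v ψ
  | v, .and φ ψ => N.SatT0 T v φ ∧ N.SatT0 T v ψ
  | v, .bex n t φ => ∃ a, N.le a (N.evalT v t) ∧ N.SatT0 T (Function.update v n a) φ
  | v, .ball n t φ => ∀ a, N.le a (N.evalT v t) → N.SatT0 T (Function.update v n a) φ

/-- Satisfaction for formulas of L_PA ∪ {T}. -/
def PAStruct.SatT (N : PAStruct) (T : N.M → Prop) : (ℕ → N.M) → TFml → Prop
  | v, .eq t u => N.evalT v t = N.evalT v u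
  | v, .tr t => T (N.evalT v t)
  | v, .not φ => ¬ N.SatT T v φ
  | v, .or φ ψ => N.SatT T v φ ∨ N.SatT T v ψ
  | v, .and φ ψ => N.SatT T v φ ∧ N.SatT T v ψ
  | v, .ex n φ => ∃ a, N.SatT T (Function.update v n a) φ
  | v, .all n φ => ∀ a, N.SatT T (Function.update v n a) φ

/-- Satisfaction for formulas of L_PA extended by predicates indexed by `P`,
    interpreted by `I`. -/
def PAStruct.SatX (N : PAStruct) {P : Type} (I : P → N.M → Prop) : (ℕ → N.M) → FmlX P → Prop
  | v, .eq t u => N.evalT v t = N.evalT v u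
  | v, .pat p t => I p (N.evalT v t)
  | v, .not φ => ¬ N.SatX I v φ
  | v, .or φ ψ => N.SatX I v φ ∨ N.SatX I v ψ
  | v, .and φ ψ => N.SatX I v φ ∧ N.SatX I v ψ
  | v, .ex n φ => ∃ a, N.SatX I (Function.update v n a) φ
  | v, .all n φ => ∀ a, N.SatX I (Function.update v n a) φ

/-- `N` is a model of PA: the basic axioms for S, +, × and the full first-order
    induction scheme (with parameters) for L_PA-formulas. -/
def PAStruct.ModelOfPA (N : PAStruct) : Prop :=
  (∀ x, N.succ x ≠ N.zero) ∧
  (∀ x y, N.succ x = N.succ y → x = y) ∧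
  (∀ x, N.add x N.zero = x) ∧
  (∀ x y, N.add x (N.succ y) = N.succ (N.add x y)) ∧
  (∀ x, N.mul x N.zero = N.zero) ∧
  (∀ x y, N.mul x (N.succ y) = N.add (N.mul x y) x) ∧
  (∀ (φ : Fml) (n : ℕ) (v : ℕ → N.M),
    N.Sat (Function.update v n N.zero) φ →
    (∀ a, N.Sat (Function.update v n a) φ → N.Sat (Function.update v n (N.succ a)) φ) →
    ∀ a, N.Sat (Function.update v n a) φ)

/-- The interpretation of the numeral of `n`. -/
def PAStruct.std (N : PAStruct) : ℕ → N.M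
  | 0 => N.zero
  | n + 1 => N.succ (N.std n)

/-- `a` is a nonstandard element. -/
def PAStruct.Nonstd (N : PAStruct) (a : N.M) : Prop := ∀ n : ℕ, a ≠ N.std n

/-- `N` satisfies the sentence `φ`. -/
def PAStruct.SatSent (N : PAStruct) (φ : Fml) : Prop := ∀ v : ℕ → N.M, N.Sat v φ

/-- IΔ₀(T): the scheme of induction (with parameters) for Δ₀ formulas of L_PA ∪ {T}. -/
def Delta0Ind (N : PAStruct) (T : N.M → Prop) : Prop :=
  ∀ (φ : TFml0) (n : ℕ) (v : ℕ → N.M),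
    N.SatT0 T (Function.update v n N.zero) φ →
    (∀ a, N.SatT0 T (Function.update v n a) φ → N.SatT0 T (Function.update v n (N.succ a)) φ) →
    ∀ a, N.SatT0 T (Function.update v n a) φ

/-- The full induction scheme (with parameters) in the language L_PA expanded by the
    family of unary predicates indexed by `P` and interpreted by `I`. -/
def FullIndX (N : PAStruct) {P : Type} (I : P → N.M → Prop) : Prop :=
  ∀ (φ : FmlX P) (n : ℕ) (v : ℕ → N.M),
    N.SatX I (Function.update v n N.zero) φ →
    (∀ a, N.SatX I (Function.update v n a) φ → N.SatX I (Function.update v n (N.succ a)) φ) →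
    ∀ a, N.SatX I (Function.update v n a) φ

/-- Δ₀-definability of a unary predicate on `N`. -/
def Definable1 (N : PAStruct) (P : N.M → Prop) : Prop :=
  ∃ φ : Fml0, ∀ x : N.M, P x ↔ N.Sat0 (fun _ => x) φ

/-- Δ₀-definability of a binary relation on `N` (variable 0 ↦ x, others ↦ y). -/
def Definable2 (N : PAStruct) (P : N.M → N.M → Prop) : Prop :=
  ∃ φ : Fml0, ∀ x y : N.M, P x y ↔ N.Sat0 (fun n => if n = 0 then x else y) φ

/-- Δ₀-definability of a ternary relation on `N`. -/
def Definable3 (N : PAStruct) (P : N.M → N.M → N.M → Prop) : Prop :=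
  ∃ φ : Fml0, ∀ x y z : N.M,
    P x y z ↔ N.Sat0 (fun n => if n = 0 then x else if n = 1 then y else z) φ

/-- The internal (Gödel-coded) syntax of the model `N`: predicates distinguishing codes
    of variables, terms, formulas, sentences and coded finite sequences thereof, the
    basic syntactic operations on codes, assignments, the Δ₀ arithmetical truth
    predicate `Tr0`, propositional derivability, together with their basic
    (PA-provable) properties, including Δ₀-definability of the coding apparatus. -/
structure Coding (N : PAStruct) where
  Var' : N.M → Prop
  Trm' : N.M → Prop
  ClTrm' : N.M → Prop
  Fml' : N.M → Prop
  Fml1' : N.M → Prop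
  Sent' : N.M → Prop
  qfSent' : N.M → Prop
  FinSeq' : N.M → Prop
  SentSeq' : N.M → Prop
  FmlSeq' : N.M → Prop
  ClTrmSeq' : N.M → Prop
  lh : N.M → N.M
  app : N.M → N.M → N.M
  snoc : N.M → N.M → N.M
  concat : N.M → N.M → N.M
  negSeq : N.M → N.M
  val : N.M → N.M
  valSeq : N.M → N.M
  num : N.M → N.M
  eq' : N.M → N.M → N.M
  not' : N.M → N.M
  or' : N.M → N.M → N.M
  and' : N.M → N.M → N.M
  ex' : N.M → N.M → N.M
  all' : N.M → N.M → N.M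
  bigOr : N.M → N.M
  subst : N.M → N.M → N.M → N.M
  substSeq : N.M → N.M → N.M
  subst1 : N.M → N.M → N.M
  Asn : N.M → N.M → Prop
  substA : N.M → N.M → N.M
  evalA : N.M → N.M → N.M
  asnUpd : N.M → N.M → N.M → N.M
  asnExt : N.M → N.M → N.M → Prop
  emptyAsn : N.M
  freeIn : N.M → N.M → Prop
  Tr0 : N.M → Prop
  PrPropFrom : Set N.M → N.M → Prop
  sent_fml : ∀ x, Sent' x → Fml' x
  fml1_fml : ∀ x, Fml1' x → Fml' x
  qf_sent : ∀ x, qfSent' x → Sent' x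
  clt_trm : ∀ x, ClTrm' x → Trm' x
  num_cl : ∀ x, ClTrm' (num x)
  val_num : ∀ x, val (num x) = x
  sentSeq_iff : ∀ s, SentSeq' s ↔ (FinSeq' s ∧ ∀ i, N.lt i (lh s) → Sent' (app s i))
  fmlSeq_iff : ∀ s, FmlSeq' s ↔ (FinSeq' s ∧ ∀ i, N.lt i (lh s) → Fml' (app s i))
  snoc_fin : ∀ s x, FinSeq' s → FinSeq' (snoc s x)
  snoc_lh : ∀ s x, FinSeq' s → lh (snoc s x) = N.succ (lh s)
  snoc_app : ∀ s x i, FinSeq' s → N.lt i (lh s) → app (snoc s x) i = app s i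
  snoc_last : ∀ s x, FinSeq' s → app (snoc s x) (lh s) = x
  concat_fin : ∀ s t, FinSeq' s → FinSeq' t → FinSeq' (concat s t)
  concat_lh : ∀ s t, FinSeq' s → FinSeq' t → lh (concat s t) = N.add (lh s) (lh t)
  concat_app_l : ∀ s t i, FinSeq' s → FinSeq' t → N.lt i (lh s) → app (concat s t) i = app s i
  concat_app_r : ∀ s t i, FinSeq' s → FinSeq' t → N.lt i (lh t) →
    app (concat s t) (N.add (lh s) i) = app t i
  negSeq_seq : ∀ s, SentSeq' s → SentSeq' (negSeq s)
  negSeq_lh : ∀ s, SentSeq' s → lh (negSeq s) = lh s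
  negSeq_app : ∀ s i, SentSeq' s → N.lt i (lh s) → app (negSeq s) i = not' (app s i)
  sent_not : ∀ φ, Sent' φ → Sent' (not' φ)
  sent_or : ∀ φ ψ, Sent' φ → Sent' ψ → Sent' (or' φ ψ)
  sent_and : ∀ φ ψ, Sent' φ → Sent' ψ → Sent' (and' φ ψ)
  sent_eq : ∀ s t, ClTrm' s → ClTrm' t → Sent' (eq' s t)
  bigOr_sent : ∀ s, SentSeq' s → Sent' (bigOr s)
  bigOr_one : ∀ s, SentSeq' s → lh s = N.succ N.zero → bigOr s = app s N.zero
  bigOr_snoc : ∀ s ψ, SentSeq' s → N.lt N.zero (lh s) → Sent' ψ →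
    bigOr (snoc s ψ) = or' (bigOr s) ψ
  substA_sent : ∀ φ α, Fml' φ → Asn φ α → Sent' (substA φ α)
  emptyAsn_asn : ∀ φ, Sent' φ → Asn φ emptyAsn
  asnUpd_asn : ∀ φ α x v, Asn φ α → Asn φ (asnUpd α x v)
  df_sent : Definable1 N Sent'
  df_fin : Definable1 N FinSeq'
  df_lh : Definable2 N (fun s y => lh s = y)
  df_app : Definable3 N (fun s i y => app s i = y)
  df_bigOr : Definable2 N (fun s y => bigOr s = y)
  df_not : Definable2 N (fun x y => not' x = y)
  df_or : Definable3 N (fun x y z => or' x y = z)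
  df_num : Definable2 N (fun x y => num x = y)
  df_negSeq : Definable2 N (fun s y => negSeq s = y)
  df_snoc : Definable3 N (fun s x y => snoc s x = y)

/-- CT⁻: the compositional axioms (including the regularity axiom) for the truth
    predicate `T` over the model `N` with internal syntax `C`. -/
structure CTminus (N : PAStruct) (C : Coding N) (T : N.M → Prop) : Prop where
  tSent : ∀ x, T x → C.Sent' x
  tEq : ∀ s t, C.ClTrm' s → C.ClTrm' t → (T (C.eq' s t) ↔ C.val s = C.val t)
  tNot : ∀ φ, C.Sent' φ → (T (C.not' φ) ↔ ¬ T φ)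
  tOr : ∀ φ ψ, C.Sent' φ → C.Sent' ψ → (T (C.or' φ ψ) ↔ (T φ ∨ T ψ))
  tAnd : ∀ φ ψ, C.Sent' φ → C.Sent' ψ → (T (C.and' φ ψ) ↔ (T φ ∧ T ψ))
  tEx : ∀ v φ, C.Var' v → C.Fml' φ → C.Sent' (C.ex' v φ) →
    (T (C.ex' v φ) ↔ ∃ x, T (C.subst φ v (C.num x)))
  tAll : ∀ v φ, C.Var' v → C.Fml' φ → C.Sent' (C.all' v φ) →
    (T (C.all' v φ) ↔ ∀ x, T (C.subst φ v (C.num x)))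
  tReg : ∀ φ s t, C.Fml' φ → C.ClTrmSeq' s → C.ClTrmSeq' t → C.valSeq s = C.valSeq t →
    (T (C.substSeq φ s) ↔ T (C.substSeq φ t))

/-- DC: a (possibly nonstandard) disjunction is true iff it has a true disjunct. -/
def DC (N : PAStruct) (C : Coding N) (T : N.M → Prop) : Prop :=
  ∀ s, C.SentSeq' s → (T (C.bigOr s) ↔ ∃ i, N.le i (C.lh s) ∧ T (C.app s i))

/-- DCout: a true disjunction has a true disjunct. -/
def DCout (N : PAStruct) (C : Coding N) (T : N.M → Prop) : Prop :=
  ∀ s, C.SentSeq' s → T (C.bigOr s) → ∃ i, N.le i (C.lh s) ∧ T (C.app s i)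

/-- DCin: a disjunction with a true disjunct is true. -/
def DCin (N : PAStruct) (C : Coding N) (T : N.M → Prop) : Prop :=
  ∀ s, C.SentSeq' s → (∃ i, N.le i (C.lh s) ∧ T (C.app s i)) → T (C.bigOr s)

/-- SeqInd: sequential induction for the predicate `T`. -/
def SeqInd (N : PAStruct) (C : Coding N) (T : N.M → Prop) : Prop :=
  ∀ s, C.FinSeq' s → T (C.app s N.zero) →
    (∀ i, N.lt (N.succ i) (C.lh s) → T (C.app s i) → T (C.app s (N.succ i))) →
    ∀ j, N.lt j (C.lh s) → T (C.app s j)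

/-- SeqOInd: sequential order induction for the predicate `T`. -/
def SeqOInd (N : PAStruct) (C : Coding N) (T : N.M → Prop) : Prop :=
  ∀ s, C.FinSeq' s →
    (∀ j, N.lt j (C.lh s) → (∀ i, N.lt i j → T (C.app s i)) → T (C.app s j)) →
    ∀ l, N.lt l (C.lh s) → T (C.app s l)

/-- INT: internal induction for the truth predicate. -/
def INT (N : PAStruct) (C : Coding N) (T : N.M → Prop) : Prop :=
  ∀ φ, C.Fml1' φ → T (C.subst1 φ N.zero) →
    (∀ x, T (C.subst1 φ x) → T (C.subst1 φ (N.succ x))) →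
    ∀ x, T (C.subst1 φ x)

/-- QFC: quantifier-free correctness. -/
def QFC (N : PAStruct) (C : Coding N) (T : N.M → Prop) : Prop :=
  ∀ φ, C.qfSent' φ → C.Tr0 φ → T φ

/-- PropSnd: every arithmetical sentence provable in pure propositional logic is true. -/
def PropSnd (N : PAStruct) (C : Coding N) (T : N.M → Prop) : Prop :=
  ∀ φ, C.Sent' φ → C.PrPropFrom ∅ φ → T φ

/-- PropRef: every arithmetical sentence derivable in propositional logic from true
    premises is true. -/
def PropRef (N : PAStruct) (C : Coding N) (T : N.M → Prop) : Prop :=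
  ∀ φ, C.Sent' φ → C.PrPropFrom {y | T y} φ → T φ

/-- CT₀ = CT⁻ + Δ₀-induction for the language with the truth predicate. -/
def CT0 (N : PAStruct) (C : Coding N) (T : N.M → Prop) : Prop :=
  CTminus N C T ∧ Delta0Ind N T

/-- A theory in the language of CT⁻, given semantically as a class of models. -/
def SemTheory := (N : PAStruct) → Coding N → (N.M → Prop) → Prop

/-- `(x, y)` is in the graph of the formula `D(x, y)` of L_PA ∪ {T} in `(N, T)`. -/
def Dgraph (N : PAStruct) (T : N.M → Prop) (D : TFml) (x y : N.M) : Prop :=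
  N.SatT T (fun n => if n = 0 then x else y) D

/-- The (provably functional) formula `D` is an outer disjunction in the model
    `(N, C, T)`. -/
def OuterDisjFml (N : PAStruct) (C : Coding N) (T : N.M → Prop) (D : TFml) : Prop :=
  (∀ x, ∃! y, Dgraph N T D x y) ∧
  (∀ s y, C.SentSeq' s → Dgraph N T D s y → C.Sent' y) ∧
  (∀ s ψ y y', C.SentSeq' s → C.Sent' ψ → Dgraph N T D (C.snoc s ψ) y → Dgraph N T D s y' →
    (T y ↔ (T y' ∨ T ψ))) ∧
  (∀ s y, C.SentSeq' s → Dgraph N T D s y → T y → ∃ i, N.le i (C.lh s) ∧ T (C.app s i))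

/-- The function `Df` on codes is an outer disjunction in `(N, C, T)`. -/
def OuterDisjFun (N : PAStruct) (C : Coding N) (T : N.M → Prop) (Df : N.M → N.M) : Prop :=
  (∀ s, C.SentSeq' s → C.Sent' (Df s)) ∧
  (∀ s ψ, C.SentSeq' s → C.Sent' ψ → (T (Df (C.snoc s ψ)) ↔ (T (Df s) ∨ T ψ))) ∧
  (∀ s, C.SentSeq' s → T (Df s) → ∃ i, N.le i (C.lh s) ∧ T (C.app s i))

/-- The theory `U` has outer disjunctions. -/
def HasOuterDisj (U : SemTheory) : Prop :=
  ∃ D : TFml, ∀ (N : PAStruct) (C : Coding N) (T : N.M → Prop),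
    U N C T → OuterDisjFml N C T D

/-- `ψ` is a direct subformula of `φ` (on codes). -/
def DirSub (N : PAStruct) (C : Coding N) (ψ φ : N.M) : Prop :=
  φ = C.not' ψ ∨
  (∃ η, φ = C.or' ψ η ∨ φ = C.or' η ψ ∨ φ = C.and' ψ η ∨ φ = C.and' η ψ) ∨
  (∃ v, φ = C.ex' v ψ ∨ φ = C.all' v ψ)

/-- Tarski's compositional clause `Comp(φ)` for the satisfaction relation `S`. -/
def CompClause (N : PAStruct) (C : Coding N) (S : N.M → N.M → Prop) (φ : N.M) : Prop :=
  (∃ s t, C.Trm' s ∧ C.Trm' t ∧ φ = C.eq' s t ∧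
    ∀ α, C.Asn φ α → (S φ α ↔ C.evalA s α = C.evalA t α)) ∨
  (∃ ψ, C.Fml' ψ ∧ φ = C.not' ψ ∧ ∀ α, C.Asn φ α → (S φ α ↔ ¬ S ψ α)) ∨
  (∃ ψ η, C.Fml' ψ ∧ C.Fml' η ∧ φ = C.or' ψ η ∧
    ∀ α, C.Asn φ α → (S φ α ↔ (S ψ α ∨ S η α))) ∨
  (∃ ψ η, C.Fml' ψ ∧ C.Fml' η ∧ φ = C.and' ψ η ∧
    ∀ α, C.Asn φ α → (S φ α ↔ (S ψ α ∧ S η α))) ∨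
  (∃ ψ v, C.Fml' ψ ∧ C.Var' v ∧ φ = C.ex' v ψ ∧
    ∀ α, C.Asn φ α → (S φ α ↔ ∃ β, C.asnExt β α v ∧ S ψ β)) ∨
  (∃ ψ v, C.Fml' ψ ∧ C.Var' v ∧ φ = C.all' v ψ ∧
    ∀ α, C.Asn φ α → (S φ α ↔ ∀ β, C.asnExt β α v → S ψ β))

/-- `S` is a satisfaction class with witnessing domain `D`. -/
def SatClassWith (N : PAStruct) (C : Coding N) (S : N.M → N.M → Prop) (D : Set N.M) : Prop :=
  (∀ φ ∈ D, C.Fml' φ) ∧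
  (∀ φ α, S φ α → C.Fml' φ ∧ C.Asn φ α) ∧
  (∀ φ α, S φ α → CompClause N C S φ) ∧
  (∀ φ α, S φ α → φ ∈ D ∨ ∃ ψ ∈ D, φ = C.not' ψ) ∧
  (∀ φ ∈ D, CompClause N C S φ) ∧
  (∀ φ ∈ D, ∀ ψ, C.Fml' ψ → DirSub N C ψ φ → ψ ∈ D) ∧
  (∀ φ ∈ D, ∀ α, C.Asn φ α → S φ α ∨ S (C.not' φ) α)

/-- `S` is a satisfaction class. -/
def IsSatClass (N : PAStruct) (C : Coding N) (S : N.M → N.M → Prop) : Prop :=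
  ∃ D, SatClassWith N C S D

/-- The domain of the satisfaction class `S` (the maximal witnessing set). -/
def satDom (N : PAStruct) (C : Coding N) (S : N.M → N.M → Prop) : Set N.M :=
  {φ | ∃ D, SatClassWith N C S D ∧ φ ∈ D}

/-- `S` is a full satisfaction class: its domain consists of all formulas. -/
def FullSatClass (N : PAStruct) (C : Coding N) (S : N.M → N.M → Prop) : Prop :=
  IsSatClass N C S ∧ ∀ φ, C.Fml' φ → φ ∈ satDom N C S

/-- Extensional equivalence of the pairs `(φ, α)` and `(ψ, β)`. -/
def ExtEquiv (N : PAStruct) (C : Coding N) (φ α ψ β : N.M) : Prop :=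
  ∃ η s t, C.Fml' η ∧ C.ClTrmSeq' s ∧ C.ClTrmSeq' t ∧ C.valSeq s = C.valSeq t ∧
    C.substA φ α = C.substSeq η s ∧ C.substA ψ β = C.substSeq η t

/-- `S` is invariant under extensional equivalence (regularity for satisfaction
    classes). -/
def RegularInv (N : PAStruct) (C : Coding N) (S : N.M → N.M → Prop) : Prop :=
  ∀ φ α ψ β, ExtEquiv N C φ α ψ β → (S φ α ↔ S ψ β)

/-- Internal induction holds for the satisfaction relation `S`. -/
def IntIndSat (N : PAStruct) (C : Coding N) (S : N.M → N.M → Prop) : Prop :=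
  ∀ φ, C.Fml1' φ → ∀ v, C.freeIn v φ → ∀ α, C.Asn φ α →
    S φ (C.asnUpd α N.zero v) →
    (∀ x, S φ (C.asnUpd α x v) → S φ (C.asnUpd α (N.succ x) v)) →
    ∀ x, S φ (C.asnUpd α x v)

/-- `j` is an elementary embedding of `N` into `N'`. -/
def ElemEmb (N N' : PAStruct) (j : N.M → N'.M) : Prop :=
  ∀ (φ : Fml) (v : ℕ → N.M), N.Sat v φ ↔ N'.Sat (fun n => j (v n)) φ

/-- The embedding `j` is compatible with the internal syntax of the two models
    (as is automatic for an elementary embedding and the definable coding). -/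
structure CodingEmb (N N' : PAStruct) (C : Coding N) (C' : Coding N') (j : N.M → N'.M) :
    Prop where
  fml : ∀ x, C.Fml' x ↔ C'.Fml' (j x)
  fml1 : ∀ x, C.Fml1' x ↔ C'.Fml1' (j x)
  sent : ∀ x, C.Sent' x ↔ C'.Sent' (j x)
  var : ∀ x, C.Var' x ↔ C'.Var' (j x)
  finSeq : ∀ x, C.FinSeq' x ↔ C'.FinSeq' (j x)
  fmlSeq : ∀ x, C.FmlSeq' x ↔ C'.FmlSeq' (j x)
  asn : ∀ x y, C.Asn x y ↔ C'.Asn (j x) (j y)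
  lh : ∀ x, j (C.lh x) = C'.lh (j x)
  app : ∀ x i, j (C.app x i) = C'.app (j x) (j i)
  not' : ∀ x, j (C.not' x) = C'.not' (j x)
  or' : ∀ x y, j (C.or' x y) = C'.or' (j x) (j y)
  and' : ∀ x y, j (C.and' x y) = C'.and' (j x) (j y)
  bigOr : ∀ x, j (C.bigOr x) = C'.bigOr (j x)
  substA : ∀ x y, j (C.substA x y) = C'.substA (j x) (j y)
  num : ∀ x, j (C.num x) = C'.num (j x)

/-- `bal` is the balanced disjunction operation on coded sequences of sentences. -/
def IsBalanced (N : PAStruct) (C : Coding N) (bal : N.M → N.M) : Prop :=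
  (∀ s, C.SentSeq' s → C.Sent' (bal s)) ∧
  (∀ s, C.SentSeq' s → C.lh s = N.zero →
    bal s = C.not' (C.eq' (C.num N.zero) (C.num N.zero))) ∧
  (∀ s, C.SentSeq' s → C.lh s = N.succ N.zero → bal s = C.app s N.zero) ∧
  (∀ s, C.SentSeq' s → N.le (N.succ (N.succ N.zero)) (C.lh s) →
    ∃ s₁ s₂ d, C.SentSeq' s₁ ∧ C.SentSeq' s₂ ∧ s = C.concat s₁ s₂ ∧ C.lh s₁ = d ∧
      (C.lh s = N.add d d ∨ C.lh s = N.succ (N.add d d)) ∧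
      bal s = C.or' (bal s₁) (bal s₂))

/-! Let `s` be a coded sequence of length `L` that is progressive in the sense of SeqOInd. The
statement "`T (s i)` for all `i ≤ x` with `i < L`" is Δ₀ in `T` once the value `s i` is
quantified below a bound `B` of all the `s i`, `i < L`; such a bound exists by induction on `L`
in PA, since the graph of `i ↦ s i` is Δ₀. Δ₀(T) induction on `x` then gives SeqOInd. SeqInd is
the instance of SeqOInd in which a successor `i + 1` only uses its predecessor `i`. -/

namespace Trm

def varBound : Trm → ℕ
  | .var n => n + 1
  | .zero => 0
  | .succ t => t.varBound
  | .add t u => max t.varBound u.varBound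
  | .mul t u => max t.varBound u.varBound

def rename (ρ : ℕ → ℕ) : Trm → Trm
  | .var n => .var (ρ n)
  | .zero => .zero
  | .succ t => .succ (t.rename ρ)
  | .add t u => .add (t.rename ρ) (u.rename ρ)
  | .mul t u => .mul (t.rename ρ) (u.rename ρ)

end Trm

namespace Fml0

def varBound : Fml0 → ℕ
  | .eq t u => max t.varBound u.varBound
  | .not φ => φ.varBound
  | .or φ ψ => max φ.varBound ψ.varBound
  | .and φ ψ => max φ.varBound ψ.varBound
  | .bex n t φ => max (n + 1) (max t.varBound φ.varBound)
  | .ball n t φ => max (n + 1) (max t.varBound φ.varBound)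

def rename (ρ : ℕ → ℕ) : Fml0 → Fml0
  | .eq t u => .eq (t.rename ρ) (u.rename ρ)
  | .not φ => .not (φ.rename ρ)
  | .or φ ψ => .or (φ.rename ρ) (ψ.rename ρ)
  | .and φ ψ => .and (φ.rename ρ) (ψ.rename ρ)
  | .bex n t φ => .bex (ρ n) (t.rename ρ) (φ.rename ρ)
  | .ball n t φ => .ball (ρ n) (t.rename ρ) (φ.rename ρ)

/-- The bound `c + c` is chosen because `c ≤ c + c` holds in every `PAStruct`, with witness `c`. -/
def bindTo (c : ℕ) : List ℕ → Fml0 → Fml0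
  | [], φ => φ
  | n :: l, φ =>
      .bex n (.add (.var c) (.var c)) (.and (.eq (.var n) (.var c)) (bindTo c l φ))

def toTFml0 : Fml0 → TFml0
  | .eq t u => .eq t u
  | .not φ => .not φ.toTFml0
  | .or φ ψ => .or φ.toTFml0 ψ.toTFml0
  | .and φ ψ => .and φ.toTFml0 ψ.toTFml0
  | .bex n t φ => .bex n t φ.toTFml0
  | .ball n t φ => .ball n t φ.toTFml0

/-- `∃ n ≤ t, φ` becomes `∃ m, (∃ m', m + m' = t) ∧ ∃ n, n = m ∧ φ` with `m` fresh for the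
whole formula: quantifying `n` directly would capture an occurrence of `n` in `t`. -/
def toFml : Fml0 → Fml
  | .eq t u => .eq t u
  | .not φ => .not φ.toFml
  | .or φ ψ => .or φ.toFml ψ.toFml
  | .and φ ψ => .and φ.toFml ψ.toFml
  | .bex n t φ =>
      let m := (Fml0.bex n t φ).varBound
      .ex m (.and (.ex (m + 1) (.eq (.add (.var m) (.var (m + 1))) t))
        (.ex n (.and (.eq (.var n) (.var m)) φ.toFml)))
  | .ball n t φ =>
      let m := (Fml0.ball n t φ).varBound
      .all m (.or (.not (.ex (m + 1) (.eq (.add (.var m) (.var (m + 1))) t)))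
        (.all n (.or (.not (.eq (.var n) (.var m))) φ.toFml)))

end Fml0

namespace PAStruct

variable (N : PAStruct)

theorem evalT_congr : ∀ (t : Trm) {v v' : ℕ → N.M}, (∀ n < t.varBound, v n = v' n) →
    N.evalT v t = N.evalT v' t
  | .var n, _, _, h => h n (Nat.lt_succ_self n)
  | .zero, _, _, _ => rfl
  | .succ t, _, _, h => congrArg N.succ (evalT_congr t h)
  | .add t u, _, _, h => congrArg₂ N.add
      (evalT_congr t fun n hn => h n (lt_max_of_lt_left hn))
      (evalT_congr u fun n hn => h n (lt_max_of_lt_right hn))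
  | .mul t u, _, _, h => congrArg₂ N.mul
      (evalT_congr t fun n hn => h n (lt_max_of_lt_left hn))
      (evalT_congr u fun n hn => h n (lt_max_of_lt_right hn))

theorem evalT_rename (ρ : ℕ → ℕ) (v : ℕ → N.M) : ∀ t : Trm,
    N.evalT v (t.rename ρ) = N.evalT (v ∘ ρ) t
  | .var _ => rfl
  | .zero => rfl
  | .succ t => congrArg N.succ (evalT_rename ρ v t)
  | .add t u => congrArg₂ N.add (evalT_rename ρ v t) (evalT_rename ρ v u)
  | .mul t u => congrArg₂ N.mul (evalT_rename ρ v t) (evalT_rename ρ v u)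

theorem sat0_congr : ∀ (φ : Fml0) {v v' : ℕ → N.M}, (∀ n < φ.varBound, v n = v' n) →
    (N.Sat0 v φ ↔ N.Sat0 v' φ)
  | .eq t u, _, _, h => by
      simp only [Sat0, N.evalT_congr t fun n hn => h n (lt_max_of_lt_left hn),
        N.evalT_congr u fun n hn => h n (lt_max_of_lt_right hn)]
  | .not φ, _, _, h => not_congr (sat0_congr φ h)
  | .or φ ψ, _, _, h => or_congr
      (sat0_congr φ fun n hn => h n (lt_max_of_lt_left hn))
      (sat0_congr ψ fun n hn => h n (lt_max_of_lt_right hn))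
  | .and φ ψ, _, _, h => and_congr
      (sat0_congr φ fun n hn => h n (lt_max_of_lt_left hn))
      (sat0_congr ψ fun n hn => h n (lt_max_of_lt_right hn))
  | .bex n t φ, v, v', h => by
      simp only [Fml0.varBound, lt_max_iff] at h
      simp only [Sat0, N.evalT_congr t fun m hm => h m (.inr (.inl hm))]
      refine exists_congr fun a => and_congr_right fun _ => sat0_congr φ fun m hm => ?_
      simp only [Function.update_apply]
      split_ifs
      exacts [rfl, h m (.inr (.inr hm))]
  | .ball n t φ, v, v', h => by
      simp only [Fml0.varBound, lt_max_iff] at h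
      simp only [Sat0, N.evalT_congr t fun m hm => h m (.inr (.inl hm))]
      refine forall_congr' fun a => imp_congr_right fun _ => sat0_congr φ fun m hm => ?_
      simp only [Function.update_apply]
      split_ifs
      exacts [rfl, h m (.inr (.inr hm))]

theorem sat0_rename {ρ : ℕ → ℕ} (hρ : ρ.Injective) : ∀ (φ : Fml0) (v : ℕ → N.M),
    N.Sat0 v (φ.rename ρ) ↔ N.Sat0 (v ∘ ρ) φ
  | .eq t u, v => by simp only [Fml0.rename, Sat0, evalT_rename]
  | .not φ, v => not_congr (sat0_rename hρ φ v)
  | .or φ ψ, v => or_congr (sat0_rename hρ φ v) (sat0_rename hρ ψ v)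
  | .and φ ψ, v => and_congr (sat0_rename hρ φ v) (sat0_rename hρ ψ v)
  | .bex n t φ, v => by
      simp only [Fml0.rename, Sat0, evalT_rename, sat0_rename hρ φ,
        Function.update_comp_eq_of_injective _ hρ]
  | .ball n t φ, v => by
      simp only [Fml0.rename, Sat0, evalT_rename, sat0_rename hρ φ,
        Function.update_comp_eq_of_injective _ hρ]

theorem sat0_bindTo {c : ℕ} : ∀ {l : List ℕ} (φ : Fml0) (w : ℕ → N.M), c ∉ l →
    (N.Sat0 w (φ.bindTo c l) ↔ N.Sat0 (fun m => if m ∈ l then w c else w m) φ)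
  | [], φ, w, _ => by simp [Fml0.bindTo]
  | n :: l, φ, w, hc => by
      rw [List.mem_cons, not_or] at hc
      have hupd : (fun m => if m ∈ l then Function.update w n (w c) c
          else Function.update w n (w c) m) = fun m => if m ∈ n :: l then w c else w m := by
        funext m
        by_cases hm : m = n <;> simp [hm, Function.update_apply]
      simp only [Fml0.bindTo, Sat0, evalT, Function.update_self, Function.update_of_ne hc.1]
      rw [← hupd, ← sat0_bindTo φ _ hc.2]
      exact ⟨fun ⟨_, _, rfl, hφ⟩ => hφ, fun hφ => ⟨w c, ⟨w c, rfl⟩, rfl, hφ⟩⟩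

theorem satT0_toTFml0 (T : N.M → Prop) : ∀ (φ : Fml0) (v : ℕ → N.M),
    N.SatT0 T v φ.toTFml0 ↔ N.Sat0 v φ
  | .eq _ _, _ => Iff.rfl
  | .not φ, v => not_congr (satT0_toTFml0 T φ v)
  | .or φ ψ, v => or_congr (satT0_toTFml0 T φ v) (satT0_toTFml0 T ψ v)
  | .and φ ψ, v => and_congr (satT0_toTFml0 T φ v) (satT0_toTFml0 T ψ v)
  | .bex _ _ φ, _ => exists_congr fun _ => and_congr_right fun _ => satT0_toTFml0 T φ _
  | .ball _ _ φ, _ => forall_congr' fun _ => imp_congr_right fun _ => satT0_toTFml0 T φ _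

theorem evalT_update_of_varBound_le {t : Trm} {m : ℕ} (h : t.varBound ≤ m) (v : ℕ → N.M)
    (b : N.M) : N.evalT (Function.update v m b) t = N.evalT v t :=
  N.evalT_congr t fun _ hk => Function.update_of_ne (by omega) _ _

theorem sat0_update_of_varBound_le {φ : Fml0} {m : ℕ} (h : φ.varBound ≤ m) (v : ℕ → N.M)
    (b : N.M) : N.Sat0 (Function.update v m b) φ ↔ N.Sat0 v φ :=
  N.sat0_congr φ fun _ hk => Function.update_of_ne (by omega) _ _

theorem sat_toFml : ∀ (φ : Fml0) (v : ℕ → N.M), N.Sat v φ.toFml ↔ N.Sat0 v φ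
  | .eq _ _, _ => Iff.rfl
  | .not φ, v => not_congr (sat_toFml φ v)
  | .or φ ψ, v => or_congr (sat_toFml φ v) (sat_toFml ψ v)
  | .and φ ψ, v => and_congr (sat_toFml φ v) (sat_toFml ψ v)
  | .bex n t φ, v => by
      simp only [Fml0.toFml]
      set m := (Fml0.bex n t φ).varBound with hm
      have hbound : n < m ∧ t.varBound ≤ m ∧ φ.varBound ≤ m := by
        simp only [hm, Fml0.varBound]; omega
      simp only [Sat, evalT, sat_toFml φ, Function.update_self,
        Function.update_of_ne (show m ≠ m + 1 by omega), Function.update_of_ne hbound.1.ne',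
        N.evalT_update_of_varBound_le (show t.varBound ≤ m + 1 by omega),
        N.evalT_update_of_varBound_le hbound.2.1, exists_eq_left,
        Function.update_comm hbound.1.ne', N.sat0_update_of_varBound_le hbound.2.2, Sat0, le]
  | .ball n t φ, v => by
      simp only [Fml0.toFml]
      set m := (Fml0.ball n t φ).varBound with hm
      have hbound : n < m ∧ t.varBound ≤ m ∧ φ.varBound ≤ m := by
        simp only [hm, Fml0.varBound]; omega
      simp only [Sat, evalT, sat_toFml φ, Function.update_self,
        Function.update_of_ne (show m ≠ m + 1 by omega), Function.update_of_ne hbound.1.ne',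
        N.evalT_update_of_varBound_le (show t.varBound ≤ m + 1 by omega),
        N.evalT_update_of_varBound_le hbound.2.1, ← imp_iff_not_or, forall_eq,
        Function.update_comm hbound.1.ne', N.sat0_update_of_varBound_le hbound.2.2, Sat0, le]

end PAStruct

/-- The definition is renamed injectively (`0 ↦ a`, `1 ↦ b`, `n ↦ n + K` otherwise), and the
images of the variables it reads as its third argument are then bound to `c`. -/
theorem Definable3.exists_fml0 {N : PAStruct} {P : N.M → N.M → N.M → Prop}
    (hP : Definable3 N P) {a b c : ℕ} (hab : a ≠ b) (hac : a ≠ c) (hbc : b ≠ c) :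
    ∃ Φ : Fml0, ∀ w : ℕ → N.M, N.Sat0 w Φ ↔ P (w a) (w b) (w c) := by
  obtain ⟨φ, hφ⟩ := hP
  set K := max a (max b c) + 1
  set ρ : ℕ → ℕ := fun n => if n = 0 then a else if n = 1 then b else n + K with hρ
  have hρinj : ρ.Injective := fun m n hmn => by
    simp only [hρ] at hmn
    split_ifs at hmn <;> omega
  set l := (List.range φ.varBound).map (· + K)
  have hmem : ∀ m, m ∈ l ↔ K ≤ m ∧ m < φ.varBound + K := fun m => by
    simp only [l, List.mem_map, List.mem_range]
    constructor
    · rintro ⟨n, hn, rfl⟩; omega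
    · intro hm; exact ⟨m - K, by omega, by omega⟩
  refine ⟨(φ.rename ρ).bindTo c l, fun w => ?_⟩
  rw [N.sat0_bindTo _ _ (by rw [hmem]; omega), N.sat0_rename hρinj, hφ]
  refine N.sat0_congr φ fun n hn => ?_
  simp only [Function.comp_apply, hρ, hmem]
  split_ifs <;> first | rfl | omega

namespace PAStruct.ModelOfPA

variable {N : PAStruct}

theorem succ_ne_zero (h : N.ModelOfPA) (x : N.M) : N.succ x ≠ N.zero := h.1 x

theorem succ_injective (h : N.ModelOfPA) {x y : N.M} (hxy : N.succ x = N.succ y) : x = y :=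
  h.2.1 x y hxy

theorem add_zero (h : N.ModelOfPA) (x : N.M) : N.add x N.zero = x := h.2.2.1 x

theorem add_succ (h : N.ModelOfPA) (x y : N.M) : N.add x (N.succ y) = N.succ (N.add x y) :=
  h.2.2.2.1 x y

theorem induction (h : N.ModelOfPA) (φ : Fml) (n : ℕ) (v : ℕ → N.M)
    (zero : N.Sat (Function.update v n N.zero) φ)
    (succ : ∀ a, N.Sat (Function.update v n a) φ → N.Sat (Function.update v n (N.succ a)) φ)
    (a : N.M) : N.Sat (Function.update v n a) φ :=
  h.2.2.2.2.2.2 φ n v zero succ a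

theorem zero_add (h : N.ModelOfPA) (x : N.M) : N.add N.zero x = x := by
  refine h.induction (.eq (.add .zero (.var 0)) (.var 0)) 0 (fun _ => x) ?_
    (fun a ha => ?_) x <;>
    simp_all [Sat, evalT, h.add_zero, h.add_succ]

theorem succ_add (h : N.ModelOfPA) (x y : N.M) : N.add (N.succ x) y = N.succ (N.add x y) := by
  refine h.induction (.eq (.add (.succ (.var 1)) (.var 0)) (.succ (.add (.var 1) (.var 0)))) 0
    (fun _ => x) ?_ (fun a ha => ?_) y <;>
    simp_all [Sat, evalT, h.add_zero, h.add_succ]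

theorem add_comm (h : N.ModelOfPA) (x y : N.M) : N.add x y = N.add y x := by
  refine h.induction (.eq (.add (.var 1) (.var 0)) (.add (.var 0) (.var 1))) 0
    (fun _ => x) ?_ (fun a ha => ?_) y <;>
    simp_all [Sat, evalT, h.add_zero, h.zero_add, h.add_succ, h.succ_add]

theorem add_assoc (h : N.ModelOfPA) (x y z : N.M) : N.add (N.add x y) z = N.add x (N.add y z) := by
  refine h.induction (.eq (.add (.add (.var 1) (.var 2)) (.var 0))
    (.add (.var 1) (.add (.var 2) (.var 0)))) 0 (fun n => if n = 1 then x else y) ?_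
    (fun a ha => ?_) z <;>
    simp_all [Sat, evalT, h.add_zero, h.add_succ]

theorem eq_zero_or_eq_succ (h : N.ModelOfPA) (x : N.M) : x = N.zero ∨ ∃ y, x = N.succ y := by
  refine h.induction (.or (.eq (.var 0) .zero) (.ex 1 (.eq (.var 0) (.succ (.var 1))))) 0
    (fun _ => x) ?_ (fun a _ => ?_) x <;>
    simp [Sat, evalT]

theorem le_refl (h : N.ModelOfPA) (a : N.M) : N.le a a := ⟨N.zero, h.add_zero a⟩

theorem le_add_left (h : N.ModelOfPA) (a b : N.M) : N.le b (N.add a b) := ⟨a, h.add_comm b a⟩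

theorem le_succ_self (h : N.ModelOfPA) (a : N.M) : N.le a (N.succ a) :=
  ⟨N.succ N.zero, by rw [h.add_succ, h.add_zero]⟩

theorem le_trans (h : N.ModelOfPA) {a b c : N.M} (hab : N.le a b) (hbc : N.le b c) : N.le a c := by
  obtain ⟨d, rfl⟩ := hab
  obtain ⟨e, rfl⟩ := hbc
  exact ⟨N.add d e, (h.add_assoc a d e).symm⟩

theorem le_succ_iff (h : N.ModelOfPA) {a b : N.M} :
    N.le a (N.succ b) ↔ N.le a b ∨ a = N.succ b := by
  constructor
  · rintro ⟨c, hc⟩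
    rcases h.eq_zero_or_eq_succ c with rfl | ⟨d, rfl⟩
    · exact .inr (by rwa [h.add_zero] at hc)
    · exact .inl ⟨d, h.succ_injective (by rwa [h.add_succ] at hc)⟩
  · rintro (hab | rfl)
    exacts [h.le_trans hab (h.le_succ_self b), h.le_refl _]

theorem eq_zero_of_le_zero (h : N.ModelOfPA) {a : N.M} (ha : N.le a N.zero) : a = N.zero := by
  obtain ⟨c, hc⟩ := ha
  rcases h.eq_zero_or_eq_succ c with rfl | ⟨d, rfl⟩
  · rwa [h.add_zero] at hc
  · exact absurd hc (by rw [h.add_succ]; exact h.succ_ne_zero _)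

theorem not_lt_zero (h : N.ModelOfPA) (a : N.M) : ¬ N.lt a N.zero := fun ha =>
  h.succ_ne_zero a (h.eq_zero_of_le_zero ha)

theorem lt_succ_iff (h : N.ModelOfPA) {a b : N.M} : N.lt a (N.succ b) ↔ N.le a b := by
  constructor
  · rintro ⟨c, hc⟩
    exact ⟨c, h.succ_injective (by rwa [h.succ_add] at hc)⟩
  · rintro ⟨c, hc⟩
    exact ⟨c, by rw [h.succ_add, hc]⟩

theorem le_of_lt (h : N.ModelOfPA) {a b : N.M} (hab : N.lt a b) : N.le a b :=
  h.le_trans (h.le_succ_self a) hab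

theorem exists_forall_le_of_definable3 (h : N.ModelOfPA) {f : N.M → N.M → N.M}
    (hf : Definable3 N fun s i y => f s i = y) (s k : N.M) :
    ∃ B, ∀ i, N.le i k → N.le (f s i) B := by
  obtain ⟨Φ, hΦ⟩ := hf.exists_fml0 (a := 0) (b := 3) (c := 4) (by omega) (by omega) (by omega)
  -- variables: `0 = s`, `1 = k` (induction), `2 = B`, `3 = i`, `4 = f s i`, `5` a witness
  let χ : Fml := .ex 2 (.all 3 (.or (.not (.ex 5 (.eq (.add (.var 3) (.var 5)) (.var 1))))
    (.ex 4 (.and Φ.toFml (.ex 5 (.eq (.add (.var 4) (.var 5)) (.var 2)))))))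
  have hχ : ∀ k, N.Sat (Function.update (fun _ => s) 1 k) χ ↔
      ∃ B, ∀ i, N.le i k → N.le (f s i) B := fun k => by
    simp [χ, Sat, evalT, sat_toFml, hΦ, le, or_iff_not_imp_left]
  refine (hχ k).1 (h.induction χ 1 _ ((hχ _).2 ⟨f s N.zero, fun i hi => ?_⟩)
    (fun a ha => (hχ _).2 ?_) k)
  · rw [h.eq_zero_of_le_zero hi]
    exact h.le_refl _
  · obtain ⟨B, hB⟩ := (hχ a).1 ha
    refine ⟨N.add B (f s (N.succ a)), fun i hi => ?_⟩
    rcases h.le_succ_iff.1 hi with hia | rfl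
    · exact h.le_trans (hB i hia) ⟨_, rfl⟩
    · exact h.le_add_left _ _

end PAStruct.ModelOfPA

theorem Delta0Ind.order_induction_of_definable3 {N : PAStruct} {T : N.M → Prop}
    (hInd : Delta0Ind N T) (h : N.ModelOfPA) {f : N.M → N.M → N.M}
    (hf : Definable3 N fun s i y => f s i = y) (s L : N.M)
    (H : ∀ j, N.lt j L → (∀ i, N.lt i j → T (f s i)) → T (f s j)) :
    ∀ l, N.lt l L → T (f s l) := by
  obtain ⟨B, hB⟩ := h.exists_forall_le_of_definable3 hf s L
  obtain ⟨Φ, hΦ⟩ := hf.exists_fml0 (a := 0) (b := 3) (c := 4) (by omega) (by omega) (by omega)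
  -- variables: `0 = s`, `1 = L`, `2 = x` (induction), `3 = i`, `4 = f s i`, `5 = B`,
  -- `6` a witness
  let ψ : TFml0 := .ball 3 (.var 2)
    (.or (.not (.bex 6 (.var 1) (.eq (.add (.succ (.var 3)) (.var 6)) (.var 1))))
      (.bex 4 (.var 5) (.and Φ.toTFml0 (.tr (.var 4)))))
  let v : ℕ → N.M := fun n => if n = 0 then s else if n = 1 then L else B
  have hψ : ∀ x, N.SatT0 T (Function.update v 2 x) ψ ↔
      ∀ i, N.le i x → N.lt i L → T (f s i) := fun x => by
    simp only [ψ, v, PAStruct.SatT0, PAStruct.evalT, PAStruct.satT0_toTFml0, hΦ,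
      Function.update_apply, ↓reduceIte, Nat.reduceEqDiff, OfNat.one_ne_ofNat, one_ne_zero,
      OfNat.ofNat_ne_zero, OfNat.ofNat_ne_one, OfNat.zero_ne_ofNat, not_exists, not_and,
      ↓existsAndEq, true_and]
    refine forall_congr' fun i => imp_congr_right fun _ => ⟨?_, fun hT => ?_⟩
    · rintro (hge | ⟨-, hTi⟩) ⟨j, hj⟩
      exacts [(hge j (hj ▸ h.le_add_left _ _) hj).elim, hTi]
    · by_cases hi : N.lt i L
      exacts [.inr ⟨hB i (h.le_of_lt hi), hT hi⟩, .inl fun j _ hj => hi ⟨j, hj⟩]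
  intro l hl
  refine (hψ l).1 (hInd ψ 2 v ((hψ _).2 fun i hi hiL => ?_) (fun a ha => (hψ _).2 ?_) l)
    l (h.le_refl l) hl
  · rw [h.eq_zero_of_le_zero hi] at hiL ⊢
    exact H _ hiL fun i hi => absurd hi (h.not_lt_zero i)
  · intro i hi hiL
    rcases h.le_succ_iff.1 hi with hia | rfl
    · exact (hψ a).1 ha i hia hiL
    · exact H _ hiL fun j hj =>
        (hψ a).1 ha j (h.lt_succ_iff.1 hj) (h.le_trans hj (h.le_trans (h.le_succ_self _) hiL))

theorem seqOInd_of_delta0Ind {N : PAStruct} (C : Coding N) {T : N.M → Prop}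
    (h : N.ModelOfPA) (hInd : Delta0Ind N T) : SeqOInd N C T :=
  fun s _ H => hInd.order_induction_of_definable3 h C.df_app s (C.lh s) H

theorem seqInd_of_seqOInd {N : PAStruct} {C : Coding N} {T : N.M → Prop}
    (h : N.ModelOfPA) (hO : SeqOInd N C T) : SeqInd N C T := by
  refine fun s hs h0 hsucc => hO s hs fun j hj hlt => ?_
  rcases h.eq_zero_or_eq_succ j with rfl | ⟨i, rfl⟩
  exacts [h0, hsucc i hj (hlt i (h.le_refl _))]

/-- Theorem (Statement 10): Over PA, with `T` an arbitrary fresh unary predicate,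
IΔ₀(T) implies SeqOInd, and SeqOInd implies SeqInd. -/
theorem idelta0_implies_seqOInd_implies_seqInd :
    ∀ (N : PAStruct) (C : Coding N) (T : N.M → Prop), N.ModelOfPA →
      ((Delta0Ind N T → SeqOInd N C T) ∧ (SeqOInd N C T → SeqInd N C T)) :=
  fun _ C _ h => ⟨seqOInd_of_delta0Ind C h, seqInd_of_seqOInd h⟩

end CTPaper
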